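/- arXiv:2605.22728 — 5 statements merged into one kernel-verified Lean document; each statement's English description precedes it below -/
import Mathlib

section
/- For every dimension d ≥ 1 and all ε, γ > 0, the proximity map P_{γ,ε} is the two-sided inverse of the map t ↦ t + γ·t/max(ε, ‖t‖) on ℝ^d: for every t ∈ ℝ^d one has P_{γ,ε}(t) + γ·P_{γ,ε}(t)/max(ε, ‖P_{γ,ε}(t)‖) = t, and for every s ∈ ℝ^d one has P_{γ,ε}(s + γ·s/max(ε, ‖s‖)) = s. -/
open Classical

/-- The proximity map of `γ` times the Huber-regularized Euclidean norm. -/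
noncomputable def proxHuber {d : ℕ} (γ ε : ℝ) (t : EuclideanSpace ℝ (Fin d)) :
    EuclideanSpace ℝ (Fin d) :=
  if t = 0 then 0 else (max (ε / (ε + γ)) (1 - γ / ‖t‖)) • t

/-!
Both maps are radial. `P_{γ,ε}` scales `t` by `c = max (ε/(ε+γ)) (1 - γ/‖t‖)`, and a direct
computation in the two regimes `‖t‖ ≤ ε + γ` and `‖t‖ > ε + γ` shows that the forward map
`F s = s + γ s / max ε ‖s‖` undoes this scaling, so `F ∘ P = id`. The forward map sends norms
`r ↦ min ((1 + γ/ε) r) (r + γ)`, a strictly increasing profile, and scales each vector by a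
positive factor depending only on its norm; hence `F` is injective and `P ∘ F = id` follows.
-/

open Function

section HuberGrad

variable {E : Type*} [NormedAddCommGroup E] [NormedSpace ℝ E]

noncomputable def huberGrad (ε : ℝ) (s : E) : E := (max ε ‖s‖)⁻¹ • s

theorem add_smul_huberGrad_eq_smul (γ ε : ℝ) (s : E) :
    s + γ • huberGrad ε s = (1 + γ / max ε ‖s‖) • s := by
  simp only [huberGrad, smul_smul, add_smul, one_smul, div_eq_mul_inv]

theorem norm_add_smul_huberGrad {γ ε : ℝ} (hγ : 0 ≤ γ) (hε : 0 < ε) (s : E) :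
    ‖s + γ • huberGrad ε s‖ = min ((1 + γ / ε) * ‖s‖) (‖s‖ + γ) := by
  rw [add_smul_huberGrad_eq_smul, norm_smul, Real.norm_of_nonneg (by positivity)]
  rcases le_total ‖s‖ ε with hle | hle
  · rw [max_eq_left hle, min_eq_left]
    rw [add_mul, one_mul, div_mul_eq_mul_div, add_le_add_iff_left, div_le_iff₀ hε]
    exact mul_le_mul_of_nonneg_left hle hγ
  · have hs : 0 < ‖s‖ := hε.trans_le hle
    rw [max_eq_right hle, min_eq_right]
    · field_simp
    · rw [add_mul, one_mul, div_mul_eq_mul_div, add_le_add_iff_left, le_div_iff₀ hε]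
      exact mul_le_mul_of_nonneg_left hle hγ

theorem injective_add_smul_huberGrad {γ ε : ℝ} (hγ : 0 ≤ γ) (hε : 0 < ε) :
    Injective fun s : E => s + γ • huberGrad ε s := by
  intro s s' h
  have hprofile : StrictMono fun r : ℝ => min ((1 + γ / ε) * r) (r + γ) :=
    fun a b hab => min_lt_min
      (mul_lt_mul_of_pos_left hab (by positivity)) (add_lt_add_left hab γ)
  have hnorm : ‖s‖ = ‖s'‖ := hprofile.injective <| by
    simpa only [norm_add_smul_huberGrad hγ hε] using congrArg norm h
  have hfactor : 0 < 1 + γ / max ε ‖s‖ := by positivity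
  simp only [add_smul_huberGrad_eq_smul, ← hnorm] at h
  exact smul_right_injective E hfactor.ne' h

end HuberGrad

noncomputable def proxHuberFactor (γ ε r : ℝ) : ℝ := max (ε / (ε + γ)) (1 - γ / r)

theorem proxHuberFactor_pos {γ ε : ℝ} (hγ : 0 ≤ γ) (hε : 0 < ε) (r : ℝ) :
    0 < proxHuberFactor γ ε r :=
  lt_max_of_lt_left (by positivity)

theorem proxHuber_eq_smul {d : ℕ} (γ ε : ℝ) (t : EuclideanSpace ℝ (Fin d)) :
    proxHuber γ ε t = proxHuberFactor γ ε ‖t‖ • t := by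
  unfold proxHuber proxHuberFactor
  split_ifs with ht <;> simp [ht]

theorem one_add_div_max_mul_proxHuberFactor {γ ε r : ℝ} (hγ : 0 ≤ γ) (hε : 0 < ε) (hr : 0 < r) :
    (1 + γ / max ε (proxHuberFactor γ ε r * r)) * proxHuberFactor γ ε r = 1 := by
  have hεγ : 0 < ε + γ := by positivity
  have hsplit : ε / (ε + γ) = 1 - γ / (ε + γ) := by field_simp; ring
  rcases le_total r (ε + γ) with hle | hle
  · have hc : proxHuberFactor γ ε r = ε / (ε + γ) := by
      rw [proxHuberFactor, max_eq_left_iff, hsplit]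
      gcongr
    have hcr : ε / (ε + γ) * r ≤ ε := by
      rw [div_mul_eq_mul_div, div_le_iff₀ hεγ]
      exact mul_le_mul_of_nonneg_left hle hε.le
    rw [hc, max_eq_left hcr]
    field_simp
  · have hc : proxHuberFactor γ ε r = 1 - γ / r := by
      rw [proxHuberFactor, max_eq_right_iff, hsplit]
      gcongr
    have hcr : (1 - γ / r) * r = r - γ := by field_simp
    have hγr : r - γ ≠ 0 := by linarith
    rw [hc, hcr, max_eq_right (by linarith)]
    field_simp
    ring

theorem proxHuber_add_smul_huberGrad {d : ℕ} {γ ε : ℝ} (hγ : 0 ≤ γ) (hε : 0 < ε)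
    (t : EuclideanSpace ℝ (Fin d)) :
    proxHuber γ ε t + γ • huberGrad ε (proxHuber γ ε t) = t := by
  rcases eq_or_ne t 0 with rfl | ht
  · simp [proxHuber, huberGrad]
  rw [add_smul_huberGrad_eq_smul, proxHuber_eq_smul, norm_smul,
    Real.norm_of_nonneg (proxHuberFactor_pos hγ hε _).le, smul_smul,
    one_add_div_max_mul_proxHuberFactor hγ hε (norm_pos_iff.mpr ht), one_smul]

theorem proxHuber_two_sided_inverse_general (d : ℕ) (ε γ : ℝ)
    (hε : 0 < ε) (hγ : 0 < γ) :
    (∀ t : EuclideanSpace ℝ (Fin d),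
      proxHuber γ ε t + γ • ((max ε ‖proxHuber γ ε t‖)⁻¹ • proxHuber γ ε t) = t) ∧
    (∀ s : EuclideanSpace ℝ (Fin d),
      proxHuber γ ε (s + γ • ((max ε ‖s‖)⁻¹ • s)) = s) := by
  have hforward_prox : LeftInverse (fun s : EuclideanSpace ℝ (Fin d) => s + γ • huberGrad ε s)
      (proxHuber γ ε) :=
    proxHuber_add_smul_huberGrad hγ.le hε
  exact ⟨hforward_prox,
    hforward_prox.rightInverse_of_injective (injective_add_smul_huberGrad hγ.le hε)⟩

/-- The proximity map `P_{γ,ε}` is the two-sided inverse of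
`t ↦ t + γ • (t / max ε ‖t‖)` on `ℝ^d`. -/
theorem proxHuber_two_sided_inverse (d : ℕ) (hd : 1 ≤ d) (ε γ : ℝ)
    (hε : 0 < ε) (hγ : 0 < γ) :
    (∀ t : EuclideanSpace ℝ (Fin d),
      proxHuber γ ε t + γ • ((max ε ‖proxHuber γ ε t‖)⁻¹ • proxHuber γ ε t) = t) ∧
    (∀ s : EuclideanSpace ℝ (Fin d),
      proxHuber γ ε (s + γ • ((max ε ‖s‖)⁻¹ • s)) = s) :=
  proxHuber_two_sided_inverse_general d ε γ hε hγ
end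

section
/- For every dimension d ≥ 1, all ε, γ > 0, every t ∈ ℝ^d, and every x ∈ ℝ^d, the Newton derivative matrix J_{γ,ε}(t) is symmetric and satisfies the two-sided bound (ε/(ε+γ))·‖x‖² ≤ ⟨J_{γ,ε}(t)x, x⟩ ≤ ‖x‖²; in particular 0 ⪯ J_{γ,ε}(t) ⪯ I with an ε/(ε+γ)-improved lower bound. -/
open Classical RealInnerProductSpace

/-- The Newton derivative `J_{γ,ε}(t)` of the proximity map of the
Huber-regularized norm, as a map acting on vectors:
`J_{γ,ε}(t) = I − (γ/‖t‖)(I − t tᵀ/‖t‖²)` if `‖t‖ > γ + ε`, and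
`J_{γ,ε}(t) = (ε/(ε+γ)) I` if `‖t‖ ≤ γ + ε`. -/
noncomputable def newtonProxHuber {d : ℕ} (γ ε : ℝ)
    (t x : EuclideanSpace ℝ (Fin d)) : EuclideanSpace ℝ (Fin d) :=
  if γ + ε < ‖t‖ then x - (γ / ‖t‖) • (x - (⟪t, x⟫ / ‖t‖ ^ 2) • t)
  else (ε / (ε + γ)) • x

/-! On the branch `‖t‖ > γ + ε`, `J_{γ,ε}(t) = I - c (I - P_t)` with `P_t` the orthogonal projection
onto `ℝ t` and `c = γ/‖t‖ ∈ (0, 1)`. Since `0 ⪯ I - P_t ⪯ I`, the quadratic form lies between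
`(1 - c)‖x‖²` and `‖x‖²`, and `1 - c ≥ 1 - γ/(γ+ε) = ε/(ε+γ)`. The other branch is a scalar in
`(0, 1]`. -/

section Rejection

variable {E : Type*} [NormedAddCommGroup E] [InnerProductSpace ℝ E]

theorem sq_inner_div_norm_sq_le (t x : E) : ⟪t, x⟫ ^ 2 / ‖t‖ ^ 2 ≤ ‖x‖ ^ 2 := by
  refine div_le_of_le_mul₀ (sq_nonneg _) (sq_nonneg _) ?_
  rw [← mul_pow, mul_comm]
  exact sq_le_sq' (neg_le_of_abs_le (abs_real_inner_le_norm t x)) (real_inner_le_norm t x)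

theorem inner_sub_smul_rejection_comm (c : ℝ) (t x y : E) :
    ⟪x - c • (x - (⟪t, x⟫ / ‖t‖ ^ 2) • t), y⟫ = ⟪x, y - c • (y - (⟪t, y⟫ / ‖t‖ ^ 2) • t)⟫ := by
  simp only [inner_sub_left, inner_sub_right, real_inner_smul_left, real_inner_smul_right,
    real_inner_comm x t]
  ring

theorem inner_sub_smul_rejection_self (c : ℝ) (t x : E) :
    ⟪x - c • (x - (⟪t, x⟫ / ‖t‖ ^ 2) • t), x⟫ = ‖x‖ ^ 2 - c * (‖x‖ ^ 2 - ⟪t, x⟫ ^ 2 / ‖t‖ ^ 2) := by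
  simp only [inner_sub_left, real_inner_smul_left, real_inner_self_eq_norm_sq]
  ring

theorem one_sub_mul_norm_sq_le_inner_sub_smul_rejection {c : ℝ} (hc : 0 ≤ c) (t x : E) :
    (1 - c) * ‖x‖ ^ 2 ≤ ⟪x - c • (x - (⟪t, x⟫ / ‖t‖ ^ 2) • t), x⟫ := by
  rw [inner_sub_smul_rejection_self]
  nlinarith [mul_nonneg hc (div_nonneg (sq_nonneg ⟪t, x⟫) (sq_nonneg ‖t‖))]

theorem inner_sub_smul_rejection_le_norm_sq {c : ℝ} (hc : 0 ≤ c) (t x : E) :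
    ⟪x - c • (x - (⟪t, x⟫ / ‖t‖ ^ 2) • t), x⟫ ≤ ‖x‖ ^ 2 := by
  rw [inner_sub_smul_rejection_self]
  nlinarith [mul_nonneg hc (sub_nonneg.2 (sq_inner_div_norm_sq_le t x))]

end Rejection

theorem div_add_le_one_sub_div {ε γ s : ℝ} (hγ : 0 ≤ γ) (hεγ : 0 < ε + γ) (hs : γ + ε ≤ s) :
    ε / (ε + γ) ≤ 1 - γ / s := by
  have hγs : γ / s ≤ γ / (ε + γ) := div_le_div_of_nonneg_left hγ hεγ (by linarith)
  have hsplit : ε / (ε + γ) = 1 - γ / (ε + γ) := by field_simp; ring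
  linarith

theorem newtonProxHuber_symm_and_bounds_general (d : ℕ) (ε γ : ℝ)
    (hε : 0 < ε) (hγ : 0 < γ) (t x : EuclideanSpace ℝ (Fin d)) :
    (∀ y : EuclideanSpace ℝ (Fin d),
      ⟪newtonProxHuber γ ε t x, y⟫ = ⟪x, newtonProxHuber γ ε t y⟫) ∧
    (ε / (ε + γ)) * ‖x‖ ^ 2 ≤ ⟪newtonProxHuber γ ε t x, x⟫ ∧
    ⟪newtonProxHuber γ ε t x, x⟫ ≤ ‖x‖ ^ 2 := by
  have hεγ : 0 < ε + γ := by positivity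
  simp only [newtonProxHuber]
  split_ifs with ht
  · have hc : 0 ≤ γ / ‖t‖ := by positivity
    have hcoef := div_add_le_one_sub_div hγ.le hεγ ht.le
    refine ⟨inner_sub_smul_rejection_comm _ t x, ?_, inner_sub_smul_rejection_le_norm_sq hc t x⟩
    calc ε / (ε + γ) * ‖x‖ ^ 2 ≤ (1 - γ / ‖t‖) * ‖x‖ ^ 2 := by gcongr
      _ ≤ _ := one_sub_mul_norm_sq_le_inner_sub_smul_rejection hc t x
  · have hcoef : ε / (ε + γ) ≤ 1 := (div_le_one hεγ).2 (by linarith)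
    simp only [real_inner_smul_left, real_inner_smul_right, real_inner_self_eq_norm_sq]
    exact ⟨fun _ => trivial, le_rfl, mul_le_of_le_one_left (sq_nonneg _) hcoef⟩

/-- The Newton derivative matrix `J_{γ,ε}(t)` is symmetric and satisfies the
two-sided bound `(ε/(ε+γ))‖x‖² ≤ ⟨J_{γ,ε}(t)x, x⟩ ≤ ‖x‖²`. -/
theorem newtonProxHuber_symm_and_bounds (d : ℕ) (hd : 1 ≤ d) (ε γ : ℝ)
    (hε : 0 < ε) (hγ : 0 < γ) (t x : EuclideanSpace ℝ (Fin d)) :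
    (∀ y : EuclideanSpace ℝ (Fin d),
      ⟪newtonProxHuber γ ε t x, y⟫ = ⟪x, newtonProxHuber γ ε t y⟫) ∧
    (ε / (ε + γ)) * ‖x‖ ^ 2 ≤ ⟪newtonProxHuber γ ε t x, x⟫ ∧
    ⟪newtonProxHuber γ ε t x, x⟫ ≤ ‖x‖ ^ 2 :=
  newtonProxHuber_symm_and_bounds_general d ε γ hε hγ t x
end

section
/- For every dimension d ≥ 1, all ε, γ > 0, every t ∈ ℝ^d, and every x ∈ ℝ^d, one has ⟨(I − J_{γ,ε}(t))·J_{γ,ε}(t)·x, x⟩ ≥ 0; that is, the product (I − J_{γ,ε}(t))·J_{γ,ε}(t) is positive semidefinite. -/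
open Classical RealInnerProductSpace

/-!
In both regimes `J_{γ,ε}(t) = I - a P` for an orthogonal projection `P` and a scalar `a ∈ [0, 1]`:
`P` projects onto `tᗮ` with `a = γ/‖t‖` when `‖t‖ > γ + ε`, and `P = I` with `a = γ/(ε + γ)`
otherwise. Since `P` is idempotent, `(I - J) J = a P (I - a P) = a (1 - a) P`, and
`⟪P x, x⟫ = ‖P x‖² ≥ 0`.
-/

section

variable {E : Type*} [NormedAddCommGroup E] [InnerProductSpace ℝ E]

theorem Submodule.inner_sub_smul_starProjection_comp_nonneg (K : Submodule ℝ E)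
    [K.HasOrthogonalProjection] {a : ℝ} (ha₀ : 0 ≤ a) (ha₁ : a ≤ 1) (x : E) :
    let J : E → E := fun y ↦ y - a • K.starProjection y
    0 ≤ ⟪J x - J (J x), x⟫ := by
  intro J
  have hP : K.starProjection (K.starProjection x) = K.starProjection x :=
    congrArg (· x) (K.isIdempotentElem_starProjection)
  have hJ : J x - J (J x) = (a * (1 - a)) • K.starProjection x := by
    simp only [J, map_sub, map_smul, hP]
    module
  rw [hJ, real_inner_smul_left]
  exact mul_nonneg (mul_nonneg ha₀ (sub_nonneg.2 ha₁)) (K.re_inner_starProjection_nonneg x)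

end

section

variable {d : ℕ} {γ ε : ℝ} {t : EuclideanSpace ℝ (Fin d)}

theorem newtonProxHuber_of_lt (h : γ + ε < ‖t‖) (x : EuclideanSpace ℝ (Fin d)) :
    newtonProxHuber γ ε t x = x - (γ / ‖t‖) • (ℝ ∙ t)ᗮ.starProjection x := by
  rw [newtonProxHuber, if_pos h, Submodule.starProjection_orthogonal_val,
    Submodule.starProjection_singleton]
  rfl

theorem newtonProxHuber_of_not_lt (h : ¬γ + ε < ‖t‖) (hεγ : ε + γ ≠ 0)
    (x : EuclideanSpace ℝ (Fin d)) :
    newtonProxHuber γ ε t x =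
      x - (γ / (ε + γ)) • (⊤ : Submodule ℝ (EuclideanSpace ℝ (Fin d))).starProjection x := by
  rw [newtonProxHuber, if_neg h, Submodule.starProjection_top, ContinuousLinearMap.id_apply]
  match_scalars
  field_simp
  ring

end

theorem newtonProxHuber_id_sub_mul_posSemidef_general (d : ℕ) (ε γ : ℝ)
    (hε : 0 < ε) (hγ : 0 < γ) (t x : EuclideanSpace ℝ (Fin d)) :
    0 ≤ ⟪newtonProxHuber γ ε t x - newtonProxHuber γ ε t (newtonProxHuber γ ε t x),
          x⟫ := by
  by_cases h : γ + ε < ‖t‖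
  · have ht : 0 < ‖t‖ := by linarith
    simp only [newtonProxHuber_of_lt h]
    exact (ℝ ∙ t)ᗮ.inner_sub_smul_starProjection_comp_nonneg (by positivity)
      ((div_le_one ht).2 (by linarith)) x
  · have hεγ : 0 < ε + γ := by positivity
    simp only [newtonProxHuber_of_not_lt h hεγ.ne']
    exact (⊤ : Submodule ℝ _).inner_sub_smul_starProjection_comp_nonneg (by positivity)
      ((div_le_one hεγ).2 (by linarith)) x

/-- The product `(I − J_{γ,ε}(t)) · J_{γ,ε}(t)` is positive semidefinite. -/
theorem newtonProxHuber_id_sub_mul_posSemidef (d : ℕ) (hd : 1 ≤ d) (ε γ : ℝ)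
    (hε : 0 < ε) (hγ : 0 < γ) (t x : EuclideanSpace ℝ (Fin d)) :
    0 ≤ ⟪newtonProxHuber γ ε t x - newtonProxHuber γ ε t (newtonProxHuber γ ε t x),
          x⟫ :=
  newtonProxHuber_id_sub_mul_posSemidef_general d ε γ hε hγ t x
end

section
/- For every dimension d ≥ 1 and all ε, γ > 0, the proximity map P_{γ,ε} is Newton differentiable on ℝ^d with Newton derivative J_{γ,ε}: for every t ∈ ℝ^d and every η > 0 there exists δ > 0 such that for all h ∈ ℝ^d with 0 < ‖h‖ < δ one has ‖P_{γ,ε}(t + h) − P_{γ,ε}(t) − J_{γ,ε}(t + h)·h‖ ≤ η·‖h‖. -/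
/-
In the ball `‖s‖ ≤ γ + ε` the proximity map is the linear map `s ↦ ε/(ε+γ) • s` and `J` is its
matrix, so the remainder vanishes. Outside it, `P(s) = s - γ • s/‖s‖` and `J(s)` is the
derivative of this map, so the remainder is `γ` times the first-order Taylor remainder of the
normalisation `s ↦ s/‖s‖`, which is `O(‖h‖²)` away from the origin. For `h` small, `t + h` can
only fall on the side of the sphere `‖s‖ = γ + ε` whose closure contains `t`, and both
estimates apply.
-/

open Classical RealInnerProductSpace

open Filter Topology

theorem IsClosed.eventually_mem_imp_mem {X : Type*} [TopologicalSpace X] {s : Set X}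
    (hs : IsClosed s) (x : X) : ∀ᶠ y in 𝓝 x, y ∈ s → x ∈ s := by
  by_cases hx : x ∈ s
  · exact Eventually.of_forall fun _ _ => hx
  · filter_upwards [hs.isOpen_compl.mem_nhds hx] with y hy hys using absurd hys hy

section Normalize

variable {E : Type*} [NormedAddCommGroup E] [InnerProductSpace ℝ E]

theorem norm_normalize_remainder_le {r : ℝ} (hr : 0 < r) {t h : E} (ht : r ≤ ‖t‖)
    (hth : r ≤ ‖t + h‖) :
    ‖‖t‖⁻¹ • t - ‖t + h‖⁻¹ • (t + h)
        + ‖t + h‖⁻¹ • (h - (⟪t + h, h⟫ / ‖t + h‖ ^ 2) • (t + h))‖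
      ≤ 3 * ‖h‖ ^ 2 / r ^ 2 := by
  set A := ‖t + h‖
  set B := ‖t‖
  set H := ‖h‖
  set p := ⟪t + h, h⟫
  have hA : 0 < A := hr.trans_le hth
  have hB : 0 < B := hr.trans_le ht
  have hp : p = (A ^ 2 - B ^ 2 + H ^ 2) / 2 := by
    have := norm_sub_sq_real (t + h) h
    rw [add_sub_cancel_right] at this
    linarith
  have hAB : |A - B| ≤ H := by simpa using abs_norm_sub_norm_le (t + h) t
  have hAB_sq : (A - B) ^ 2 ≤ H ^ 2 := sq_le_sq' (abs_le.1 hAB).1 (abs_le.1 hAB).2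
  have hsplit : B⁻¹ • t - A⁻¹ • (t + h) + A⁻¹ • (h - (p / A ^ 2) • (t + h))
      = (B⁻¹ - A⁻¹ - p / A ^ 3) • (t + h) - (B⁻¹ - A⁻¹) • h := by
    match_scalars <;> field_simp <;> ring
  -- `2 A³ B (B⁻¹ - A⁻¹ - p / A³) = (A - B)² (2A + B) - B H²`,
  -- a difference of two terms in `[0, H² (2A + B)]`.
  have hc₁ : |B⁻¹ - A⁻¹ - p / A ^ 3| * A ≤ H ^ 2 / (A * B) + H ^ 2 / (2 * A ^ 2) := by
    have hnum : |(A - B) ^ 2 * (2 * A + B) - B * H ^ 2| ≤ H ^ 2 * (2 * A + B) :=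
      abs_sub_le_of_nonneg_of_le (by positivity) (by gcongr) (by positivity) (by nlinarith)
    calc |B⁻¹ - A⁻¹ - p / A ^ 3| * A
        = |(A - B) ^ 2 * (2 * A + B) - B * H ^ 2| / (2 * A ^ 2 * B) := by
          rw [← abs_of_pos hA, ← abs_mul, abs_of_pos hA,
            ← abs_of_pos (by positivity : 0 < 2 * A ^ 2 * B), ← abs_div, hp]
          congr 1
          field_simp
          ring
      _ ≤ H ^ 2 * (2 * A + B) / (2 * A ^ 2 * B) := by gcongr
      _ = H ^ 2 / (A * B) + H ^ 2 / (2 * A ^ 2) := by field_simp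
  have hc₂ : |B⁻¹ - A⁻¹| * H ≤ H ^ 2 / (A * B) := by
    calc |B⁻¹ - A⁻¹| * H = |A - B| / (B * A) * H := by
          rw [inv_sub_inv hB.ne' hA.ne', abs_div, abs_of_pos (by positivity : 0 < B * A)]
      _ ≤ H / (B * A) * H := by gcongr
      _ = H ^ 2 / (A * B) := by rw [mul_comm B A]; ring
  rw [hsplit]
  calc ‖(B⁻¹ - A⁻¹ - p / A ^ 3) • (t + h) - (B⁻¹ - A⁻¹) • h‖
      ≤ |B⁻¹ - A⁻¹ - p / A ^ 3| * A + |B⁻¹ - A⁻¹| * H := by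
        refine (norm_sub_le _ _).trans_eq ?_
        rw [norm_smul, norm_smul, Real.norm_eq_abs, Real.norm_eq_abs]
    _ ≤ 2 * (H ^ 2 / (A * B)) + H ^ 2 / (2 * A ^ 2) := by linarith
    _ ≤ 2 * (H ^ 2 / (r * r)) + H ^ 2 / (2 * r ^ 2) := by gcongr
    _ ≤ 3 * H ^ 2 / r ^ 2 := by
        field_simp
        nlinarith [sq_nonneg H]

end Normalize

section ProxHuber

variable {d : ℕ} {γ ε : ℝ}

theorem proxHuber_of_norm_le (hγ : 0 ≤ γ) {t : EuclideanSpace ℝ (Fin d)} (ht : ‖t‖ ≤ γ + ε) :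
    proxHuber γ ε t = (ε / (ε + γ)) • t := by
  rw [proxHuber]
  split_ifs with h0
  · simp [h0]
  · have ht₀ : 0 < ‖t‖ := norm_pos_iff.2 h0
    have : γ / (ε + γ) ≤ γ / ‖t‖ := by gcongr; linarith
    have hr : ε + γ ≠ 0 := by linarith
    rw [max_eq_left]
    rw [show ε / (ε + γ) = 1 - γ / (ε + γ) by field_simp; ring]
    linarith

theorem proxHuber_of_le_norm (hγ : 0 ≤ γ) (hε : 0 < ε) {t : EuclideanSpace ℝ (Fin d)}
    (ht : γ + ε ≤ ‖t‖) : proxHuber γ ε t = (1 - γ / ‖t‖) • t := by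
  have ht₀ : 0 < ‖t‖ := by linarith
  have : γ / ‖t‖ ≤ γ / (ε + γ) := by gcongr; linarith
  rw [proxHuber, if_neg (norm_pos_iff.1 ht₀), max_eq_right]
  have hr : ε + γ ≠ 0 := by linarith
  rw [show ε / (ε + γ) = 1 - γ / (ε + γ) by field_simp; ring]
  linarith

theorem proxHuber_remainder_eq_zero_of_norm_le (hγ : 0 ≤ γ) {t h : EuclideanSpace ℝ (Fin d)}
    (ht : ‖t‖ ≤ γ + ε) (hth : ‖t + h‖ ≤ γ + ε) :
    proxHuber γ ε (t + h) - proxHuber γ ε t - newtonProxHuber γ ε (t + h) h = 0 := by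
  rw [proxHuber_of_norm_le hγ ht, proxHuber_of_norm_le hγ hth, newtonProxHuber,
    if_neg (not_lt.2 hth)]
  module

theorem norm_proxHuber_remainder_le_of_le_norm (hγ : 0 ≤ γ) (hε : 0 < ε)
    {t h : EuclideanSpace ℝ (Fin d)} (ht : γ + ε ≤ ‖t‖) (hth : γ + ε < ‖t + h‖) :
    ‖proxHuber γ ε (t + h) - proxHuber γ ε t - newtonProxHuber γ ε (t + h) h‖
      ≤ 3 * γ / (γ + ε) ^ 2 * ‖h‖ ^ 2 := by
  rw [proxHuber_of_le_norm hγ hε ht, proxHuber_of_le_norm hγ hε hth.le, newtonProxHuber,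
    if_pos hth]
  calc _ = ‖γ • (‖t‖⁻¹ • t - ‖t + h‖⁻¹ • (t + h)
        + ‖t + h‖⁻¹ • (h - (⟪t + h, h⟫ / ‖t + h‖ ^ 2) • (t + h)))‖ := by
        congr 1
        module
    _ ≤ γ * (3 * ‖h‖ ^ 2 / (γ + ε) ^ 2) := by
        rw [norm_smul, Real.norm_of_nonneg hγ]
        gcongr
        exact norm_normalize_remainder_le (by positivity) ht hth.le
    _ = 3 * γ / (γ + ε) ^ 2 * ‖h‖ ^ 2 := by ring

end ProxHuber

theorem proxHuber_newton_differentiable_general (d : ℕ) (ε γ : ℝ)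
    (hε : 0 < ε) (hγ : 0 < γ) (t : EuclideanSpace ℝ (Fin d)) (η : ℝ) (hη : 0 < η) :
    ∃ δ : ℝ, 0 < δ ∧ ∀ h : EuclideanSpace ℝ (Fin d), 0 < ‖h‖ → ‖h‖ < δ →
      ‖proxHuber γ ε (t + h) - proxHuber γ ε t - newtonProxHuber γ ε (t + h) h‖
        ≤ η * ‖h‖ := by
  set r := γ + ε
  have hr : 0 < r := by positivity
  have hnorm : Tendsto (fun h => ‖t + h‖) (𝓝 0) (𝓝 ‖t‖) := by
    simpa using ((continuous_const_add t).norm).tendsto 0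
  have hinner := hnorm.eventually ((isClosed_Iic (a := r)).eventually_mem_imp_mem ‖t‖)
  have houter := hnorm.eventually ((isClosed_Ici (a := r)).eventually_mem_imp_mem ‖t‖)
  have hsmall : ∀ᶠ h : EuclideanSpace ℝ (Fin d) in 𝓝 0, ‖h‖ < η * r ^ 2 / (3 * γ) := by
    simpa using (continuous_norm.tendsto (0 : EuclideanSpace ℝ (Fin d))).eventually
      (eventually_lt_nhds (by rw [norm_zero]; positivity))
  obtain ⟨δ, hδ, hnear⟩ := Metric.eventually_nhds_iff.1 (hinner.and (houter.and hsmall))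
  refine ⟨δ, hδ, fun h _ hhδ => ?_⟩
  obtain ⟨hin, hout, hh⟩ := hnear (by simpa using hhδ)
  rcases le_or_gt ‖t + h‖ r with hth | hth
  · rw [proxHuber_remainder_eq_zero_of_norm_le hγ.le (hin hth) hth, norm_zero]
    positivity
  · calc _ ≤ 3 * γ / r ^ 2 * ‖h‖ ^ 2 :=
          norm_proxHuber_remainder_le_of_le_norm hγ.le hε (hout hth.le) hth
      _ = 3 * γ / r ^ 2 * ‖h‖ * ‖h‖ := by ring
      _ ≤ 3 * γ / r ^ 2 * (η * r ^ 2 / (3 * γ)) * ‖h‖ := by gcongr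
      _ = η * ‖h‖ := by field_simp

/-- The proximity map `P_{γ,ε}` is Newton differentiable on `ℝ^d` with Newton
derivative `J_{γ,ε}`. -/
theorem proxHuber_newton_differentiable (d : ℕ) (hd : 1 ≤ d) (ε γ : ℝ)
    (hε : 0 < ε) (hγ : 0 < γ) (t : EuclideanSpace ℝ (Fin d)) (η : ℝ) (hη : 0 < η) :
    ∃ δ : ℝ, 0 < δ ∧ ∀ h : EuclideanSpace ℝ (Fin d), 0 < ‖h‖ → ‖h‖ < δ →
      ‖proxHuber γ ε (t + h) - proxHuber γ ε t - newtonProxHuber γ ε (t + h) h‖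
        ≤ η * ‖h‖ :=
  proxHuber_newton_differentiable_general d ε γ hε hγ t η hη
end

section
/- For every dimension d ≥ 1, all σ, ε > 0, and every w ∈ ℝ^d, the point Q_{σ,ε}(w) is the unique minimizer over the closed unit ball {y ∈ ℝ^d : ‖y‖ ≤ 1} of the function y ↦ σ·(ε/2)·‖y‖² + (1/2)·‖y − w‖²; that is, Q_{σ,ε} realizes the proximity operator of σ times the Fenchel conjugate of the Huber-regularized norm. -/
open Classical

/-- The dual proximity map `Q_{σ,ε}`. -/
noncomputable def dualProxHuber {d : ℕ} (σ ε : ℝ) (w : EuclideanSpace ℝ (Fin d)) :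
    EuclideanSpace ℝ (Fin d) :=
  if ‖w‖ ≤ 1 + σ * ε then (1 + σ * ε)⁻¹ • w else ‖w‖⁻¹ • w

/-!
Completing the square, `f(y) = σ(ε/2)‖y‖² + ½‖y − w‖²` equals
`((1 + σε)/2)‖y − w/(1 + σε)‖²` up to a constant, so minimizing `f` over the unit ball means
projecting `w/(1 + σε)` onto the ball, and `Q_{σ,ε}(w)` is exactly that projection. The
projection `p` of `v` satisfies the variational inequality `⟪p - v, y - p⟫ ≥ 0` on the ball,
which gives the strong-convexity bound `f(p) + ((1 + σε)/2)‖y − p‖² ≤ f(y)`;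
minimality and uniqueness both follow from it.
-/

section InnerProductSpace

variable {E : Type*} [NormedAddCommGroup E] [InnerProductSpace ℝ E]

noncomputable def unitBallProj (v : E) : E :=
  if ‖v‖ ≤ 1 then v else ‖v‖⁻¹ • v

theorem norm_unitBallProj_le (v : E) : ‖unitBallProj v‖ ≤ 1 := by
  unfold unitBallProj
  split_ifs with hv
  · exact hv
  · rw [norm_smul, norm_inv, norm_norm, inv_mul_cancel₀ (by linarith)]

theorem inner_unitBallProj_sub_nonneg (v : E) {y : E} (hy : ‖y‖ ≤ 1) :
    0 ≤ inner ℝ (unitBallProj v - v) (y - unitBallProj v) := by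
  unfold unitBallProj
  split_ifs with hv
  · simp
  · have hv_pos : 0 < ‖v‖ := by linarith
    have hcoeff : ‖v‖⁻¹ - 1 ≤ 0 := sub_nonpos.mpr (inv_le_one_of_one_le₀ (by linarith))
    have hinner : inner ℝ v y - ‖v‖ ≤ 0 := by
      nlinarith [real_inner_le_norm v y, norm_nonneg v]
    have hdiff : ‖v‖⁻¹ • v - v = (‖v‖⁻¹ - 1) • v := by rw [sub_smul, one_smul]
    calc (0 : ℝ) ≤ (‖v‖⁻¹ - 1) * (inner ℝ v y - ‖v‖) :=
          mul_nonneg_of_nonpos_of_nonpos hcoeff hinner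
      _ = inner ℝ (‖v‖⁻¹ • v - v) (y - ‖v‖⁻¹ • v) := by
        rw [hdiff, real_inner_smul_left, inner_sub_right, real_inner_smul_right,
          real_inner_self_eq_norm_sq]
        field_simp

theorem sq_norm_sub_unitBallProj_add_le (v : E) {y : E} (hy : ‖y‖ ≤ 1) :
    ‖y - unitBallProj v‖ ^ 2 + ‖unitBallProj v - v‖ ^ 2 ≤ ‖y - v‖ ^ 2 := by
  have h := norm_add_sq_real (y - unitBallProj v) (unitBallProj v - v)
  rw [sub_add_sub_cancel, real_inner_comm] at h
  linarith [inner_unitBallProj_sub_nonneg v hy]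

noncomputable def proxObjective (σ ε : ℝ) (w y : E) : ℝ :=
  σ * (ε / 2) * ‖y‖ ^ 2 + (1 / 2) * ‖y - w‖ ^ 2

theorem proxObjective_eq_sq_norm_sub {σ ε : ℝ} (ha : 1 + σ * ε ≠ 0) (w y : E) :
    proxObjective σ ε w y = (1 + σ * ε) / 2 * ‖y - (1 + σ * ε)⁻¹ • w‖ ^ 2
      + σ * ε / (2 * (1 + σ * ε)) * ‖w‖ ^ 2 := by
  unfold proxObjective
  simp only [← real_inner_self_eq_norm_sq, inner_sub_left, inner_sub_right, real_inner_smul_left,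
    real_inner_smul_right, real_inner_comm w y]
  field_simp
  ring

end InnerProductSpace

theorem dualProxHuber_eq_unitBallProj {d : ℕ} {σ ε : ℝ} (ha : 0 < 1 + σ * ε)
    (w : EuclideanSpace ℝ (Fin d)) :
    dualProxHuber σ ε w = unitBallProj ((1 + σ * ε)⁻¹ • w) := by
  have hnorm : ‖(1 + σ * ε)⁻¹ • w‖ = (1 + σ * ε)⁻¹ * ‖w‖ := by
    rw [norm_smul, norm_inv, Real.norm_of_nonneg ha.le]
  unfold dualProxHuber unitBallProj
  simp only [hnorm, inv_mul_le_iff₀ ha, mul_one]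
  split_ifs with hw
  · rfl
  · rw [smul_smul]
    field_simp

theorem proxObjective_dualProxHuber_add_le {d : ℕ} {σ ε : ℝ} (ha : 0 < 1 + σ * ε)
    (w : EuclideanSpace ℝ (Fin d)) {y : EuclideanSpace ℝ (Fin d)} (hy : ‖y‖ ≤ 1) :
    proxObjective σ ε w (dualProxHuber σ ε w)
        + (1 + σ * ε) / 2 * ‖y - dualProxHuber σ ε w‖ ^ 2 ≤ proxObjective σ ε w y := by
  rw [proxObjective_eq_sq_norm_sub ha.ne', proxObjective_eq_sq_norm_sub ha.ne',
    dualProxHuber_eq_unitBallProj ha]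
  have := sq_norm_sub_unitBallProj_add_le ((1 + σ * ε)⁻¹ • w) hy
  nlinarith

theorem dualProxHuber_is_prox_general (d : ℕ) (σ ε : ℝ)
    (hσ : 0 < σ) (hε : 0 < ε) (w : EuclideanSpace ℝ (Fin d)) :
    ‖dualProxHuber σ ε w‖ ≤ 1 ∧
    (∀ y : EuclideanSpace ℝ (Fin d), ‖y‖ ≤ 1 →
      σ * (ε / 2) * ‖dualProxHuber σ ε w‖ ^ 2 + (1 / 2) * ‖dualProxHuber σ ε w - w‖ ^ 2
        ≤ σ * (ε / 2) * ‖y‖ ^ 2 + (1 / 2) * ‖y - w‖ ^ 2) ∧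
    (∀ y : EuclideanSpace ℝ (Fin d), ‖y‖ ≤ 1 →
      (∀ y' : EuclideanSpace ℝ (Fin d), ‖y'‖ ≤ 1 →
        σ * (ε / 2) * ‖y‖ ^ 2 + (1 / 2) * ‖y - w‖ ^ 2
          ≤ σ * (ε / 2) * ‖y'‖ ^ 2 + (1 / 2) * ‖y' - w‖ ^ 2) →
      y = dualProxHuber σ ε w) := by
  have ha : 0 < 1 + σ * ε := by positivity
  have hq : ‖dualProxHuber σ ε w‖ ≤ 1 := by
    rw [dualProxHuber_eq_unitBallProj ha]
    exact norm_unitBallProj_le _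
  have key := fun y (hy : ‖y‖ ≤ 1) => proxObjective_dualProxHuber_add_le ha w hy
  refine ⟨hq, fun y hy => ?_, fun y hy hmin => ?_⟩
  · exact (le_add_of_nonneg_right (by positivity)).trans (key y hy)
  · have hle : proxObjective σ ε w (dualProxHuber σ ε w)
        + (1 + σ * ε) / 2 * ‖y - dualProxHuber σ ε w‖ ^ 2
          ≤ proxObjective σ ε w (dualProxHuber σ ε w) := (key y hy).trans (hmin _ hq)
    have hsq : ‖y - dualProxHuber σ ε w‖ ^ 2 ≤ 0 :=
      nonpos_of_mul_nonpos_right (by linarith) (by positivity : 0 < (1 + σ * ε) / 2)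
    rw [← sub_eq_zero, ← norm_eq_zero]
    exact pow_eq_zero_iff two_ne_zero |>.mp (le_antisymm hsq (sq_nonneg _))

/-- `Q_{σ,ε}(w)` is the unique minimizer over the closed unit ball of
`y ↦ σ(ε/2)‖y‖² + ½‖y − w‖²`; it realizes the proximity operator of `σ` times
the Fenchel conjugate of the Huber-regularized norm. -/
theorem dualProxHuber_is_prox (d : ℕ) (hd : 1 ≤ d) (σ ε : ℝ)
    (hσ : 0 < σ) (hε : 0 < ε) (w : EuclideanSpace ℝ (Fin d)) :
    ‖dualProxHuber σ ε w‖ ≤ 1 ∧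
    (∀ y : EuclideanSpace ℝ (Fin d), ‖y‖ ≤ 1 →
      σ * (ε / 2) * ‖dualProxHuber σ ε w‖ ^ 2 + (1 / 2) * ‖dualProxHuber σ ε w - w‖ ^ 2
        ≤ σ * (ε / 2) * ‖y‖ ^ 2 + (1 / 2) * ‖y - w‖ ^ 2) ∧
    (∀ y : EuclideanSpace ℝ (Fin d), ‖y‖ ≤ 1 →
      (∀ y' : EuclideanSpace ℝ (Fin d), ‖y'‖ ≤ 1 →
        σ * (ε / 2) * ‖y‖ ^ 2 + (1 / 2) * ‖y - w‖ ^ 2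
          ≤ σ * (ε / 2) * ‖y'‖ ^ 2 + (1 / 2) * ‖y' - w‖ ^ 2) →
      y = dualProxHuber σ ε w) :=
  dualProxHuber_is_prox_general d σ ε hσ hε w
end
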